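/- arXiv:2112.14243 — 2 statements merged into one kernel-verified Lean document; each statement's English description precedes it below -/
import Mathlib

section
/- Let π be a chain on finite V and ω1, ω2 coordinated strict partial orders with (ω1 ∪ ω2)^+ a strict partial order. If (add^*_{≤_π}(ω1) ∪ ω2)^+ is a strict partial order, then (add^*_{≤_π}(ω1) ∪ ω2)^+ ⊆ add^*_{≤_π}((ω1 ∪ ω2)^+). (Postulate P4 for the induced operator.) -/
open Classical

variable {V : Type*}

/-- Transitive closure of a set of pairs (a relation). -/
def tc (R : Set (V × V)) : Set (V × V) :=
  {p | Relation.TransGen (fun a b => (a, b) ∈ R) p.1 p.2}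

/-- A strict partial order: transitive and irreflexive. -/
def IsSPO (R : Set (V × V)) : Prop :=
  (∀ a b c, (a, b) ∈ R → (b, c) ∈ R → (a, c) ∈ R) ∧ ∀ a, (a, a) ∉ R

/-- The chain determined by a duplicate-free list `l` (earlier = better):
`(i,j)` is in the chain iff `i` occurs strictly before `j` in `l`. -/
def chainSet (l : List V) : Set (V × V) := {p | [p.1, p.2].Sublist l}

/-- The direct comparisons of the chain `l`: pairs of consecutive elements. -/
def dirSet (l : List V) : Set (V × V) := {p | p ∈ l.zip l.tail}

/-- Cycle-free part of `(π ∪ ω)⁺`. -/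
def cf (l : List V) (w : Set (V × V)) : Set (V × V) :=
  {p | p ∈ tc (chainSet l ∪ w) ∧ (p.2, p.1) ∉ tc (chainSet l ∪ w)}

/-- Cyclic part of `π` with respect to `ω`: direct comparisons involved in a cycle. -/
def cyc (l : List V) (w : Set (V × V)) : Set (V × V) :=
  {p | p ∈ dirSet l ∧ (p.2, p.1) ∈ tc (chainSet l ∪ w)}

/-- A total preorder on a set `S` of comparisons. -/
def IsTotalPreorderOn (le : V × V → V × V → Prop) (S : Set (V × V)) : Prop :=
  (∀ a ∈ S, ∀ b ∈ S, ∀ c ∈ S, le a b → le b c → le a c) ∧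
    (∀ a ∈ S, ∀ b ∈ S, le a b ∨ le b a)

/-- A strict linear order on a set `S` of comparisons. -/
def IsLinearOn (lt : V × V → V × V → Prop) (S : Set (V × V)) : Prop :=
  (∀ a ∈ S, ∀ b ∈ S, ∀ c ∈ S, lt a b → lt b c → lt a c) ∧
    (∀ a ∈ S, ∀ b ∈ S, a ≠ b → lt a b ∨ lt b a) ∧ (∀ a ∈ S, ¬ lt a a)

/-- The `≤`-minimal (best) elements of `S`. -/
def minset (le : V × V → V × V → Prop) (S : Set (V × V)) : Set (V × V) :=
  {c | c ∈ S ∧ ∀ d ∈ S, le c d}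

/-- Remaining elements of `S` after peeling off the first `n` levels. -/
def rem (le : V × V → V × V → Prop) (S : Set (V × V)) : ℕ → Set (V × V)
  | 0 => S
  | n + 1 => rem le S n \ minset le (rem le S n)

/-- The `i`-th level (for `i ≥ 1`) of `S` under the total preorder `le`. -/
def level (le : V × V → V × V → Prop) (S : Set (V × V)) (i : ℕ) : Set (V × V) :=
  minset le (rem le S (i - 1))

/-- The addition operator: `addSeq le l w 0 = (ω ∪ cf(π,ω))⁺`, and step `i+1`
tries to add level `i+1` of `dir_π` intersected with `cyc(π,ω)`. -/
noncomputable def addSeq (le : V × V → V × V → Prop) (l : List V) (w : Set (V × V)) :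
    ℕ → Set (V × V)
  | 0 => tc (w ∪ cf l w)
  | i + 1 =>
    if IsSPO (tc (addSeq le l w i ∪ (minset le (rem le (dirSet l) i) ∩ cyc l w))) then
      tc (addSeq le l w i ∪ (minset le (rem le (dirSet l) i) ∩ cyc l w))
    else addSeq le l w i

/-- The fixed point of the addition operator. -/
noncomputable def addStar (le : V × V → V × V → Prop) (l : List V) (w : Set (V × V)) :
    Set (V × V) :=
  ⋃ i, addSeq le l w i

/-- The set of `π`-completions of `ω`. -/
def completions (l : List V) (w : Set (V × V)) : Set (Set (V × V)) :=
  {R | ∃ δ, δ ⊆ dirSet l ∧ R = tc (w ∪ δ) ∧ IsSPO R}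

/-- `ω₁` and `ω₂` are coordinated with respect to the chain `l`. -/
def Coordinated (l : List V) (w1 w2 : Set (V × V)) : Prop :=
  ∀ δ ⊆ cyc l w1,
    (∀ p ∈ δ, p ∉ tc (w1 ∪ w2) ∧ (p.2, p.1) ∉ tc (w1 ∪ w2)) →
    IsSPO (tc (w1 ∪ δ)) → IsSPO (tc (tc (w1 ∪ w2) ∪ δ))

/-!
Write `≼` for the preorder generated by `π ∪ ω₁`; `cf(π, ω₁)` is its strict part. Put
`ω = (ω₁ ∪ ω₂)⁺` and `R = (add*(ω₁) ∪ ω₂)⁺`, a strict partial order containing `cf(π, ω₁)`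
and `ω`.

The key fact: if `x ≺ v` and every element of the chain is `≽ x` or `≼ v`, then `(v, x)` is
not in `(π ∪ R)⁺`. Along a path from `v`, each point stays `R`-above a point lying above the
cut at `v` (`≽ v`, or a chain element not `≼ v`): an `R`-step keeps this, and a chain step is
either in `cf(π, ω₁) ⊆ R`, or lands above the cut, or starts from a chain element `≺ v`, which
would close an `R`-cycle. Applied to a pair of `cf(π, ω₁)` whose `≼`-path meets the chain,
this gives `cf(π, ω₁) ⊆ cf(π, ω) ∪ ω₁⁺`.

Then, level by level, stage `i` of `add*(ω₁)` joined with `ω₂` lies in stage `i` of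
`add*(ω)`, and the latter stays inside `(R ∪ cf(π, ω))⁺`, again a strict partial order since
`R ⊆ (π ∪ ω)⁺`. So whenever the construction for `ω₁` adds a level, the one for `ω` adds it
too.
-/

section TransitiveClosure

variable {S T : Set (V × V)} {a b c : V}

theorem mem_tc : (a, b) ∈ tc S ↔ Relation.TransGen (fun x y => (x, y) ∈ S) a b := Iff.rfl

theorem subset_tc : S ⊆ tc S := fun _ h => Relation.TransGen.single h

theorem subset_tc_union_left : S ⊆ tc (S ∪ T) := Set.subset_union_left.trans subset_tc

theorem subset_tc_union_right : T ⊆ tc (S ∪ T) := Set.subset_union_right.trans subset_tc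

theorem tc_trans (hab : (a, b) ∈ tc S) (hbc : (b, c) ∈ tc S) : (a, c) ∈ tc S :=
  Relation.TransGen.trans hab hbc

theorem tc_mono (h : S ⊆ T) : tc S ⊆ tc T :=
  fun _ hp => Relation.TransGen.mono (fun _ _ hxy => h hxy) _ _ hp

theorem tc_subset_of_trans (hST : S ⊆ T)
    (hT : ∀ a b c, (a, b) ∈ T → (b, c) ∈ T → (a, c) ∈ T) : tc S ⊆ T := by
  rintro ⟨x, y⟩ (h : Relation.TransGen _ x y)
  induction h with
  | single hxy => exact hST hxy
  | tail _ hbc ih => exact hT _ _ _ ih (hST hbc)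

theorem tc_tc_union : tc (tc S ∪ T) = tc (S ∪ T) :=
  (tc_subset_of_trans (Set.union_subset (tc_mono Set.subset_union_left) subset_tc_union_right)
    fun _ _ _ => tc_trans).antisymm
    (tc_mono (Set.union_subset_union_left _ subset_tc))

theorem isSPO_tc_of_subset (hST : S ⊆ T) (hT : IsSPO T) : IsSPO (tc S) :=
  ⟨fun _ _ _ => tc_trans, fun a ha => hT.2 a (tc_subset_of_trans hST hT.1 ha)⟩

theorem tc_iUnion_subset {ι : Type*} {S : ι → Set (V × V)} (hS : Directed (· ⊆ ·) S) :
    tc (⋃ i, S i) ⊆ ⋃ i, tc (S i) := by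
  rintro ⟨x, y⟩ (h : Relation.TransGen _ x y)
  induction h with
  | single hxy =>
    obtain ⟨i, hi⟩ := Set.mem_iUnion.1 hxy
    exact Set.mem_iUnion.2 ⟨i, subset_tc hi⟩
  | @tail b c _ hbc ih =>
    obtain ⟨i, hi⟩ := Set.mem_iUnion.1 ih
    obtain ⟨j, hj⟩ := Set.mem_iUnion.1 hbc
    obtain ⟨k, hik, hjk⟩ := hS i j
    exact Set.mem_iUnion.2 ⟨k, tc_trans (tc_mono hik hi) (subset_tc (hjk hj))⟩

end TransitiveClosure

section Chain

variable {l : List V} {a b : V}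

theorem dirSet_subset_chainSet : ∀ l : List V, dirSet l ⊆ chainSet l
  | [] | [_] => by simp [dirSet]
  | x :: y :: t => by
    rintro p (hp | ⟨_, hp⟩)
    · exact ((List.nil_sublist t).cons_cons y).cons_cons x
    · exact (dirSet_subset_chainSet (y :: t) hp : List.Sublist [p.1, p.2] (y :: t)).cons x

theorem mem_of_mem_chainSet (h : (a, b) ∈ chainSet l) : a ∈ l ∧ b ∈ l :=
  ⟨(h : List.Sublist [a, b] l).subset (by simp), (h : List.Sublist [a, b] l).subset (by simp)⟩

theorem chainSet_total (ha : a ∈ l) (hb : b ∈ l) :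
    a = b ∨ (a, b) ∈ chainSet l ∨ (b, a) ∈ chainSet l := by
  induction l with
  | nil => simp at ha
  | cons x t ih =>
    rcases List.mem_cons.1 ha with rfl | hat
    · rcases List.mem_cons.1 hb with rfl | hbt
      · exact Or.inl rfl
      · exact Or.inr (Or.inl ((List.singleton_sublist.2 hbt).cons_cons a))
    rcases List.mem_cons.1 hb with rfl | hbt
    · exact Or.inr (Or.inr ((List.singleton_sublist.2 hat).cons_cons b))
    · rcases ih hat hbt with h | h | h
      · exact Or.inl h
      · exact Or.inr (Or.inl ((h : List.Sublist [a, b] t).cons x))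
      · exact Or.inr (Or.inr ((h : List.Sublist [b, a] t).cons x))

end Chain

section Preorder

variable {l : List V} {w : Set (V × V)} {x y z v a : V}

variable (l w) in
def Reach : V → V → Prop :=
  Relation.ReflTransGen fun a b => (a, b) ∈ chainSet l ∪ w

theorem Reach.of_mem_chainSet (h : (x, y) ∈ chainSet l) : Reach l w x y :=
  Relation.ReflTransGen.single (Or.inl h)

theorem mem_cf_iff : (x, y) ∈ cf l w ↔ Reach l w x y ∧ ¬ Reach l w y x := by
  refine ⟨fun ⟨hxy, hyx⟩ => ⟨hxy.to_reflTransGen, fun h => hyx ?_⟩,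
    fun ⟨hxy, hyx⟩ => ⟨?_, fun h => hyx h.to_reflTransGen⟩⟩
  · rcases Relation.reflTransGen_iff_eq_or_transGen.1 h with rfl | h
    exacts [hxy, h]
  · rcases Relation.reflTransGen_iff_eq_or_transGen.1 hxy with rfl | h
    exacts [absurd Relation.ReflTransGen.refl hyx, h]

theorem mem_tc_or_exists_mem_list (h : (x, y) ∈ tc (chainSet l ∪ w)) :
    (x, y) ∈ tc w ∨ ∃ a ∈ l, Reach l w x a ∧ Reach l w a y := by
  replace h := mem_tc.1 h
  induction h with
  | single hxy =>
    rcases hxy with hc | hw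
    exacts [Or.inr ⟨x, (mem_of_mem_chainSet hc).1, .refl, .of_mem_chainSet hc⟩,
      Or.inl (subset_tc hw)]
  | @tail b c hxb hbc ih =>
    rcases hbc with hc | hw
    · exact Or.inr ⟨b, (mem_of_mem_chainSet hc).1, hxb.to_reflTransGen, .of_mem_chainSet hc⟩
    · rcases ih with h | ⟨a, ha, hxa, hab⟩
      exacts [Or.inl (tc_trans h (subset_tc hw)), Or.inr ⟨a, ha, hxa, hab.tail (Or.inr hw)⟩]

variable (l w) in
def SplitsChain (x v : V) : Prop :=
  (x, v) ∈ cf l w ∧ ∀ z ∈ l, Reach l w x z ∨ Reach l w z v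

variable (l w) in
def LiesAbove (v y : V) : Prop :=
  Reach l w v y ∨ (y ∈ l ∧ ¬ Reach l w y v)

theorem splitsChain_of_mem_list (hxv : (x, v) ∈ cf l w) (ha : a ∈ l) (hxa : Reach l w x a)
    (hav : Reach l w a v) : SplitsChain l w x v := by
  refine ⟨hxv, fun z hz => ?_⟩
  rcases chainSet_total hz ha with rfl | hza | haz
  exacts [Or.inl hxa, Or.inr ((Reach.of_mem_chainSet hza).trans hav),
    Or.inl (hxa.trans (Reach.of_mem_chainSet haz))]

theorem SplitsChain.mem_cf (hx : SplitsChain l w x v) (hy : LiesAbove l w v y) :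
    (x, y) ∈ cf l w := by
  obtain ⟨hxv, hsplit⟩ := hx
  rw [mem_cf_iff] at hxv ⊢
  rcases hy with hvy | ⟨hy, hyv⟩
  · exact ⟨hxv.1.trans hvy, fun hyx => hxv.2 (hvy.trans hyx)⟩
  · rcases hsplit y hy with hxy | hyv'
    exacts [⟨hxy, fun hyx => hyv (hyx.trans hxv.1)⟩, absurd hyv' hyv]

theorem mem_cf_or_liesAbove_or_splitsChain (h : (z, y) ∈ chainSet l) :
    (z, y) ∈ cf l w ∨ LiesAbove l w v y ∨ SplitsChain l w z v := by
  have hzy : Reach l w z y := .of_mem_chainSet h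
  by_cases hyz : Reach l w y z
  · by_cases hvy : Reach l w v y
    · exact Or.inr (Or.inl (Or.inl hvy))
    by_cases hyv : Reach l w y v
    · refine Or.inr (Or.inr (splitsChain_of_mem_list ?_ (mem_of_mem_chainSet h).1 .refl
        (hzy.trans hyv)))
      exact mem_cf_iff.2 ⟨hzy.trans hyv, fun hvz => hvy (hvz.trans hzy)⟩
    · exact Or.inr (Or.inl (Or.inr ⟨(mem_of_mem_chainSet h).2, hyv⟩))
  · exact Or.inl (mem_cf_iff.2 ⟨hzy, hyz⟩)

theorem not_mem_tc_of_splitsChain {Q : Set (V × V)} (hQ : IsSPO Q) (hcf : cf l w ⊆ Q)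
    (hx : SplitsChain l w x v) : (v, x) ∉ tc (chainSet l ∪ Q) := by
  have no_return : ∀ {y z}, SplitsChain l w z v → LiesAbove l w v y → (y = z ∨ (y, z) ∈ Q) →
      False := by
    rintro y z hz hy (rfl | hyz)
    · exact hQ.2 y (hcf (hz.mem_cf hy))
    · exact hQ.2 z (hQ.1 _ _ _ (hcf (hz.mem_cf hy)) hyz)
  have above : ∀ {z}, Relation.ReflTransGen (fun a b => (a, b) ∈ chainSet l ∪ Q) v z →
      ∃ y, LiesAbove l w v y ∧ (y = z ∨ (y, z) ∈ Q) := by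
    intro z hvz
    induction hvz with
    | refl => exact ⟨v, Or.inl .refl, Or.inl rfl⟩
    | @tail z z' _ hzz' ih =>
      obtain ⟨y, hy, hyz⟩ := ih
      have extend : (z, z') ∈ Q → ∃ y, LiesAbove l w v y ∧ (y = z' ∨ (y, z') ∈ Q) :=
        fun h => ⟨y, hy, Or.inr (hyz.elim (· ▸ h) (hQ.1 _ _ _ · h))⟩
      rcases hzz' with hc | hq
      · rcases mem_cf_or_liesAbove_or_splitsChain (v := v) hc with hcf' | hz' | hz
        exacts [extend (hcf hcf'), ⟨z', hz', Or.inl rfl⟩, (no_return hz hy hyz).elim]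
      · exact extend hq
  intro hvx
  obtain ⟨y, hy, hyx⟩ := above hvx.to_reflTransGen
  exact no_return hx hy hyx

end Preorder

section CyclicParts

variable {l : List V} {w w' R : Set (V × V)}

theorem cf_subset_cf_union_tc (hww' : w ⊆ w') (hR : IsSPO R) (hcf : cf l w ⊆ R)
    (hw'R : w' ⊆ R) : cf l w ⊆ cf l w' ∪ tc w := by
  rintro ⟨x, y⟩ hxy
  by_cases hyx : (y, x) ∈ tc (chainSet l ∪ w')
  · refine Or.inr ((mem_tc_or_exists_mem_list hxy.1).resolve_right ?_)
    rintro ⟨a, ha, hxa, hay⟩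
    exact not_mem_tc_of_splitsChain hR hcf (splitsChain_of_mem_list hxy ha hxa hay)
      (tc_mono (Set.union_subset_union_right _ hw'R) hyx)
  · exact Or.inl ⟨tc_mono (Set.union_subset_union_right _ hww') hxy.1, hyx⟩

theorem isSPO_tc_union_cf (hR : IsSPO R) (hRT : R ⊆ tc (chainSet l ∪ w)) :
    IsSPO (tc (R ∪ cf l w)) := by
  have hRreach : ∀ {x y}, (x, y) ∈ R → Reach l w x y := fun h => (hRT h).to_reflTransGen
  have back : ∀ {x y}, (x, y) ∈ tc (R ∪ cf l w) → Reach l w y x → (x, y) ∈ R := by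
    intro x y hxy
    replace hxy := mem_tc.1 hxy
    induction hxy with
    | single h =>
      intro hyx
      exact h.resolve_right fun hcf => (mem_cf_iff.1 hcf).2 hyx
    | @tail b c hxb hbc ih =>
      intro hcx
      have hbc' : Reach l w b c := hbc.elim hRreach fun h => (mem_cf_iff.1 h).1
      have hxb' := ih (hbc'.trans hcx)
      rcases hbc with h | h
      exacts [hR.1 _ _ _ hxb' h, ((mem_cf_iff.1 h).2 (hcx.trans (hRreach hxb'))).elim]
  exact ⟨fun _ _ _ => tc_trans, fun x hx => hR.2 x (back hx .refl)⟩

theorem cyc_mono (h : w ⊆ w') : cyc l w ⊆ cyc l w' :=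
  fun _ hp => ⟨hp.1, tc_mono (Set.union_subset_union_right _ h) hp.2⟩

theorem dirSet_subset_cyc_union_cf : dirSet l ⊆ cyc l w ∪ cf l w := fun _ hp =>
  (Classical.em _).imp (⟨hp, ·⟩) (⟨subset_tc_union_left (dirSet_subset_chainSet l hp), ·⟩)

end CyclicParts

section AddSeq

variable {le : V × V → V × V → Prop} {l : List V} {w : Set (V × V)}

theorem addSeq_subset_tc (i : ℕ) : addSeq le l w i ⊆ tc (chainSet l ∪ w) := by
  induction i with
  | zero =>
    exact tc_subset_of_trans (Set.union_subset subset_tc_union_right fun _ hp => hp.1)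
      fun _ _ _ => tc_trans
  | succ i ih =>
    rw [addSeq]
    split_ifs
    · refine tc_subset_of_trans (Set.union_subset ih fun p hp => ?_) fun _ _ _ => tc_trans
      exact subset_tc_union_left (dirSet_subset_chainSet l hp.2.1)
    · exact ih

theorem addStar_subset_tc : addStar le l w ⊆ tc (chainSet l ∪ w) :=
  Set.iUnion_subset addSeq_subset_tc

theorem union_cf_subset_addStar : w ∪ cf l w ⊆ addStar le l w :=
  fun _ hp => Set.mem_iUnion.2 ⟨0, subset_tc hp⟩

theorem monotone_addSeq : Monotone (addSeq le l w) := by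
  refine monotone_nat_of_le_succ fun i => ?_
  show addSeq le l w i ⊆ addSeq le l w (i + 1)
  rw [addSeq]
  split_ifs
  exacts [subset_tc_union_left, subset_rfl]

variable {w2 : Set (V × V)}

theorem tc_union_subset_tc_addStar_union : tc (w ∪ w2) ⊆ tc (addStar le l w ∪ w2) :=
  tc_mono (Set.union_subset_union_left _ (Set.subset_union_left.trans union_cf_subset_addStar))

theorem tc_addStar_union_subset : tc (addStar le l w ∪ w2) ⊆ tc (chainSet l ∪ tc (w ∪ w2)) :=
  tc_subset_of_trans (Set.union_subset
      (addStar_subset_tc.trans (tc_mono (Set.union_subset_union_right _ subset_tc_union_left)))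
      (subset_tc_union_right.trans subset_tc_union_right))
    fun _ _ _ => tc_trans

end AddSeq

theorem ite_extend_subset {A B S S' W U : Set (V × V)} (hAB : tc (A ∪ W) ⊆ B) (hBU : B ⊆ U)
    (hU : IsSPO U) (hSS' : S ⊆ S') (hS'U : IsSPO (tc (A ∪ S)) → S' ⊆ U) :
    tc ((if IsSPO (tc (A ∪ S)) then tc (A ∪ S) else A) ∪ W) ⊆
        (if IsSPO (tc (B ∪ S')) then tc (B ∪ S') else B) ∧
      (if IsSPO (tc (B ∪ S')) then tc (B ∪ S') else B) ⊆ U := by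
  have hAB' : A ⊆ B := subset_tc_union_left.trans hAB
  have hAS : A ∪ S ⊆ tc (B ∪ S') := (Set.union_subset_union hAB' hSS').trans subset_tc
  by_cases hA : IsSPO (tc (A ∪ S))
  · have hBS'U : B ∪ S' ⊆ U := Set.union_subset hBU (hS'U hA)
    rw [if_pos hA, if_pos (isSPO_tc_of_subset hBS'U hU), tc_tc_union]
    refine ⟨tc_subset_of_trans (Set.union_subset hAS ?_) fun _ _ _ => tc_trans,
      tc_subset_of_trans hBS'U hU.1⟩
    exact (subset_tc_union_right.trans hAB).trans subset_tc_union_left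
  · rw [if_neg hA, if_neg fun hB => hA (isSPO_tc_of_subset hAS hB)]
    exact ⟨hAB, hBU⟩

theorem tc_addSeq_union_subset {le : V × V → V × V → Prop} {l : List V} {w1 w2 : Set (V × V)}
    (hR : IsSPO (tc (addStar le l w1 ∪ w2))) (i : ℕ) :
    tc (addSeq le l w1 i ∪ w2) ⊆ addSeq le l (tc (w1 ∪ w2)) i ∧
      addSeq le l (tc (w1 ∪ w2)) i ⊆ tc (tc (addStar le l w1 ∪ w2) ∪ cf l (tc (w1 ∪ w2))) := by
  set ω := tc (w1 ∪ w2)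
  have hw1ω : w1 ⊆ ω := subset_tc_union_left
  have hcf1R : cf l w1 ⊆ tc (addStar le l w1 ∪ w2) :=
    (Set.subset_union_right.trans union_cf_subset_addStar).trans subset_tc_union_left
  have hU := isSPO_tc_union_cf hR tc_addStar_union_subset
  have hcf := cf_subset_cf_union_tc hw1ω hR hcf1R tc_union_subset_tc_addStar_union
  induction i with
  | zero =>
    refine ⟨?_, tc_mono (Set.union_subset_union_left _ tc_union_subset_tc_addStar_union)⟩
    show tc (tc (w1 ∪ cf l w1) ∪ w2) ⊆ tc (ω ∪ cf l ω)
    rw [tc_tc_union]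
    refine tc_subset_of_trans ?_ fun _ _ _ => tc_trans
    rintro p ((h | h) | h)
    · exact subset_tc_union_left (hw1ω h)
    · exact subset_tc ((hcf h).symm.imp (tc_mono Set.subset_union_left ·) id)
    · exact subset_tc_union_left (subset_tc_union_right h)
  | succ i ih =>
    refine ite_extend_subset ih.1 ih.2 hU (Set.inter_subset_inter_right _ (cyc_mono hw1ω))
      fun hA p ⟨hmin, hcyc⟩ => ?_
    rcases dirSet_subset_cyc_union_cf hcyc.1 with h | h
    · refine subset_tc_union_left (subset_tc_union_left (Set.mem_iUnion.2 ⟨i + 1, ?_⟩))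
      rw [addSeq, if_pos hA]
      exact subset_tc_union_right ⟨hmin, h⟩
    · exact subset_tc_union_left (hcf1R h)

theorem stmt13_general {V : Type*} (l : List V)
    (le : V × V → V × V → Prop)
    (w1 w2 : Set (V × V))
    (hspo : IsSPO (tc (addStar le l w1 ∪ w2))) :
    tc (addStar le l w1 ∪ w2) ⊆ addStar le l (tc (w1 ∪ w2)) :=
  calc tc (addStar le l w1 ∪ w2) = tc (⋃ i, (addSeq le l w1 i ∪ w2)) := by
        rw [addStar, Set.iUnion_union]
    _ ⊆ ⋃ i, tc (addSeq le l w1 i ∪ w2) :=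
        tc_iUnion_subset (Monotone.directed_le fun _ _ h =>
          Set.union_subset_union_left _ (monotone_addSeq h))
    _ ⊆ addStar le l (tc (w1 ∪ w2)) :=
        Set.iUnion_mono fun i => (tc_addSeq_union_subset hspo i).1

theorem stmt13 {V : Type*} [Fintype V] (l : List V) (hl : l.Nodup)
    (le : V × V → V × V → Prop) (hle : IsTotalPreorderOn le (dirSet l))
    (w1 w2 : Set (V × V)) (hw1 : IsSPO w1) (hw2 : IsSPO w2)
    (hw12 : IsSPO (tc (w1 ∪ w2))) (hco : Coordinated l w1 w2)
    (hspo : IsSPO (tc (addStar le l w1 ∪ w2))) :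
    tc (addStar le l w1 ∪ w2) ⊆ addStar le l (tc (w1 ∪ w2)) :=
  stmt13_general l le w1 w2 hspo
end

section
/- Let π be a chain on finite V and ω a strict partial order such that cyc(π,ω) ≠ ∅ but every single direct comparison c ∈ cyc(π,ω) satisfies: (add^0(ω) ∪ {c})^+ is a strict partial order. Then for any strict linear order <_π on dir_π, the <_π-minimal element of cyc(π,ω) is contained in add^*_{<_π}(ω); i.e., the most preferred contested comparison is always retained under a decisive assignment. -/
open Classical

variable {V : Type*}

section AuxLemmas

variable {V : Type*}

lemma tc_tc (R : Set (V × V)) : tc (tc R) = tc R := by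
  ext ⟨a, b⟩
  constructor
  · intro h
    have h' : Relation.TransGen (Relation.TransGen (fun x y : V => (x, y) ∈ R)) a b := h
    rw [Relation.transGen_idem] at h'
    exact h'
  · exact fun h => Relation.TransGen.single h

lemma addSeq_tc (le : V × V → V × V → Prop) (l : List V) (w : Set (V × V)) :
    ∀ n, tc (addSeq le l w n) = addSeq le l w n := by
  intro n
  induction n with
  | zero => exact tc_tc _
  | succ n ih =>
    simp only [addSeq]
    split
    · exact tc_tc _
    · exact ih

lemma addSeq_step_empty (le : V × V → V × V → Prop) (l : List V) (w : Set (V × V)) (n : ℕ)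
    (h : minset le (rem le (dirSet l) n) ∩ cyc l w = ∅) :
    addSeq le l w (n + 1) = addSeq le l w n := by
  have key : tc (addSeq le l w n ∪ (minset le (rem le (dirSet l) n) ∩ cyc l w))
      = addSeq le l w n := by
    rw [h, Set.union_empty, addSeq_tc]
  simp only [addSeq, key]
  split <;> rfl

lemma rem_subset (le : V × V → V × V → Prop) (S : Set (V × V)) :
    ∀ n, rem le S n ⊆ S := by
  intro n
  induction n with
  | zero => exact fun _ h => h
  | succ n ih => exact fun p hp => ih hp.1

lemma finset_exists_min (le : V × V → V × V → Prop) (S : Set (V × V))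
    (htrans : ∀ a ∈ S, ∀ b ∈ S, ∀ c ∈ S, le a b → le b c → le a c)
    (htot : ∀ a ∈ S, ∀ b ∈ S, le a b ∨ le b a)
    (hrefl : ∀ a, le a a) (t : Finset (V × V)) :
    (↑t : Set (V × V)) ⊆ S → t.Nonempty → ∃ m ∈ t, ∀ d ∈ t, le m d := by
  classical
  induction t using Finset.induction_on with
  | empty => intro _ h; exact absurd h (by simp)
  | @insert a t ha ih =>
    intro hts _
    have haS : a ∈ S := hts (by simp)
    rcases t.eq_empty_or_nonempty with rfl | htne
    · exact ⟨a, by simp, by simp [hrefl]⟩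
    · obtain ⟨m, hm, hmin⟩ := ih (fun p hp => hts (by simp [hp])) htne
      have hmS : m ∈ S := hts (by simp [hm])
      rcases htot a haS m hmS with hle | hle
      · refine ⟨a, by simp, ?_⟩
        intro d hd
        rcases Finset.mem_insert.1 hd with rfl | hd
        · exact hrefl _
        · exact htrans a haS m hmS d (hts (by simp [hd])) hle (hmin d hd)
      · refine ⟨m, by simp [hm], ?_⟩
        intro d hd
        rcases Finset.mem_insert.1 hd with rfl | hd
        · exact hle
        · exact hmin d hd

lemma set_exists_min (le : V × V → V × V → Prop) (S T : Set (V × V))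
    (htrans : ∀ a ∈ S, ∀ b ∈ S, ∀ c ∈ S, le a b → le b c → le a c)
    (htot : ∀ a ∈ S, ∀ b ∈ S, le a b ∨ le b a)
    (hrefl : ∀ a, le a a) (hT : T.Finite) (hTS : T ⊆ S) (hne : T.Nonempty) :
    ∃ m ∈ T, ∀ d ∈ T, le m d := by
  classical
  obtain ⟨m, hm, hmin⟩ := finset_exists_min le S htrans htot hrefl hT.toFinset
    (by simpa using hTS) (by simpa [Set.Finite.toFinset] using hne)
  exact ⟨m, by simpa using hm, fun d hd => hmin d (by simpa using hd)⟩

end AuxLemmas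

theorem stmt19 {V : Type*} [Fintype V] (l : List V) (hl : l.Nodup)
    (w : Set (V × V)) (hw : IsSPO w)
    (lt : V × V → V × V → Prop) (hlt : IsLinearOn lt (dirSet l))
    (hne : (cyc l w).Nonempty)
    (hadd : ∀ c ∈ cyc l w, IsSPO (tc (tc (w ∪ cf l w) ∪ {c})))
    (c : V × V) (hc : c ∈ cyc l w)
    (hmin : ∀ d ∈ cyc l w, d ≠ c → lt c d) :
    c ∈ addStar (fun c d => lt c d ∨ c = d) l w := by
  classical
  set le : V × V → V × V → Prop := fun c d => lt c d ∨ c = d with hle_def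
  obtain ⟨htr, htot', hirr⟩ := hlt
  have hcyc_dir : cyc l w ⊆ dirSet l := fun p hp => hp.1
  have hcd : c ∈ dirSet l := hcyc_dir hc
  have letrans : ∀ a ∈ dirSet l, ∀ b ∈ dirSet l, ∀ d ∈ dirSet l,
      le a b → le b d → le a d := by
    intro a ha b hb d hd hab hbd
    rcases hab with hab | rfl
    · rcases hbd with hbd | rfl
      · exact Or.inl (htr a ha b hb d hd hab hbd)
      · exact Or.inl hab
    · exact hbd
  have letot : ∀ a ∈ dirSet l, ∀ b ∈ dirSet l, le a b ∨ le b a := by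
    intro a ha b hb
    by_cases h : a = b
    · exact Or.inl (Or.inr h)
    · rcases htot' a ha b hb h with h' | h'
      · exact Or.inl (Or.inl h')
      · exact Or.inr (Or.inl h')
  have lerefl : ∀ a : V × V, le a a := fun a => Or.inr rfl
  have hdirfin : (dirSet l).Finite := (l.zip l.tail).finite_toSet
  have key : ∀ n, c ∈ rem le (dirSet l) n →
      minset le (rem le (dirSet l) n) ∩ cyc l w ⊆ {c} := by
    intro n hcn d hd
    obtain ⟨hdmin, hdcyc⟩ := hd
    by_contra hdc
    have hdc' : d ≠ c := hdc
    have h1 : lt c d := hmin d hdcyc hdc'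
    have h2 : le d c := hdmin.2 c hcn
    rcases h2 with h2 | h2
    · exact hirr d (hcyc_dir hdcyc)
        (htr d (hcyc_dir hdcyc) c hcd d (hcyc_dir hdcyc) h2 h1)
    · exact hdc' h2
  have hfin : ∀ n, (rem le (dirSet l) n).Finite :=
    fun n => hdirfin.subset (rem_subset le (dirSet l) n)
  have hex : ∃ n, c ∈ minset le (rem le (dirSet l) n) := by
    by_contra hno
    push_neg at hno
    have hcn : ∀ n, c ∈ rem le (dirSet l) n := by
      intro n
      induction n with
      | zero => exact hcd
      | succ n ih => exact ⟨ih, fun h => hno n h⟩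
    have hdec : ∀ n, ((hfin (n+1)).toFinset).card < ((hfin n).toFinset).card := by
      intro n
      obtain ⟨m, hm, hmm⟩ := set_exists_min le (dirSet l) (rem le (dirSet l) n)
        letrans letot lerefl (hfin n) (rem_subset le (dirSet l) n) ⟨c, hcn n⟩
      apply Finset.card_lt_card
      rw [Set.Finite.toFinset_ssubset_toFinset]
      constructor
      · exact Set.diff_subset
      · intro hsub
        exact (hsub hm).2 ⟨hm, hmm⟩
    have hmono : ∀ n, ((hfin n).toFinset).card + n ≤ ((hfin 0).toFinset).card := by
      intro n
      induction n with
      | zero => simp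
      | succ n ih =>
        have := hdec n
        omega
    have := hmono (((hfin 0).toFinset).card + 1)
    omega
  set k := Nat.find hex with hk_def
  have hck : c ∈ minset le (rem le (dirSet l) k) := Nat.find_spec hex
  have hrem : ∀ i, i ≤ k → c ∈ rem le (dirSet l) i := by
    intro i
    induction i with
    | zero => intro _; exact hcd
    | succ i ih =>
      intro h
      have hik : i < k := Nat.lt_of_succ_le h
      exact ⟨ih hik.le, Nat.find_min hex hik⟩
  have hsame : ∀ i, i ≤ k → addSeq le l w i = addSeq le l w 0 := by
    intro i
    induction i with
    | zero => intro _; rfl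
    | succ i ih =>
      intro h
      have hik : i < k := Nat.lt_of_succ_le h
      have hempty : minset le (rem le (dirSet l) i) ∩ cyc l w = ∅ := by
        apply Set.eq_empty_iff_forall_notMem.2
        intro d hd
        have hdc : d = c := key i (hrem i hik.le) hd
        subst hdc
        exact (Nat.find_min hex hik) hd.1
      rw [addSeq_step_empty le l w i hempty, ih hik.le]
  have hminset_eq : minset le (rem le (dirSet l) k) ∩ cyc l w = {c} := by
    apply Set.Subset.antisymm (key k hck.1)
    intro d hd
    have : d = c := hd
    subst this
    exact ⟨hck, hc⟩
  have hspo : IsSPO (tc (addSeq le l w k ∪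
      (minset le (rem le (dirSet l) k) ∩ cyc l w))) := by
    rw [hsame k le_rfl, hminset_eq]
    exact hadd c hc
  have hstep : addSeq le l w (k+1) = tc (addSeq le l w k ∪
      (minset le (rem le (dirSet l) k) ∩ cyc l w)) := by
    simp only [addSeq]
    rw [if_pos hspo]
  refine Set.mem_iUnion.2 ⟨k+1, ?_⟩
  rw [hstep]
  have hcmem : (c.1, c.2) ∈ addSeq le l w k ∪
      (minset le (rem le (dirSet l) k) ∩ cyc l w) := by
    right
    rw [hminset_eq]
    rfl
  exact Relation.TransGen.single hcmem
end
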